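/- Let p be prime, Γ = Z × (Z/pZ), and F a finite subset of Γ that is not of the form F̃ × (Z/pZ) for any finite F̃ ⊆ Z. Then every co-tile A of F (a set with F ⊕ A = Γ) is periodic, i.e., there exists γ ∈ Γ of infinite order with γ + A = A. -/

import Mathlib

/-!
Write `A_n ⊆ Z/p` for the column of `A` over `n ∈ ℤ` and `F_s` for the fibre of `F` over `s`.
Pairing the tiling identity `∑_{f ∈ F} 1_A(z - f) = 1` with a character `φ` of `Z/p` gives,
for every `n`, the linear recurrence `∑_s φ̂(F_s) φ̂(A_{n-s}) = ∑_u φ(u)` for the character sums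
`φ̂(B) = ∑_{y ∈ B} φ(y)`. Since `F` is not a union of full columns, some fibre `F_s` is a proper
nonempty subset of `Z/p`, and then `φ̂(F_s) ≠ 0` for every `φ`, by the irreducibility of the
`p`-th cyclotomic polynomial. So each recurrence can be solved for its
extreme terms, and as characters separate subsets of `Z/p`, any `D` consecutive columns
(`D` the diameter of the projection of `F`) determine the next and the previous one. There are
finitely many such windows, so two of them coincide, and the sequence of columns is periodic.
-/

/-- `F ⊕ A = G`: every element of `G` has a unique representation `f + a`,
`f ∈ F`, `a ∈ A`. -/
def Tiles {G : Type*} [AddCommGroup G] (F : Finset G) (A : Set G) : Prop :=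
  ∀ z : G, ∃! q : G × G, q.1 ∈ F ∧ q.2 ∈ A ∧ q.1 + q.2 = z

open Finset Polynomial

namespace Finset

variable {α β : Type*}

noncomputable def fiber (F : Finset (α × β)) (a : α) : Finset β :=
  F.preimage (Prod.mk a) (Prod.mk_right_injective a).injOn

@[simp]
theorem mem_fiber {F : Finset (α × β)} {a : α} {b : β} : b ∈ F.fiber a ↔ (a, b) ∈ F :=
  mem_preimage

theorem sum_eq_sum_fiber [DecidableEq α] {M : Type*} [AddCommMonoid M] (F : Finset (α × β))
    (g : α → β → M) : ∑ f ∈ F, g f.1 f.2 = ∑ a ∈ F.image Prod.fst, ∑ b ∈ F.fiber a, g a b :=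
  sum_finset_product' _ _ _ fun _ =>
    ⟨fun hf => ⟨mem_image_of_mem _ hf, mem_fiber.2 hf⟩, fun h => mem_fiber.1 h.2⟩

theorem exists_fiber_ne_univ [DecidableEq α] [Fintype β] {F : Finset (α × β)}
    (hF : ¬ ∃ Ft : Finset α, F = Ft ×ˢ univ) : ∃ a ∈ F.image Prod.fst, F.fiber a ≠ univ := by
  by_contra! h
  refine hF ⟨F.image Prod.fst, ext fun f =>
    ⟨fun hf => mem_product.2 ⟨mem_image_of_mem _ hf, mem_univ _⟩, fun hf => ?_⟩⟩
  exact mem_fiber.1 (h f.1 (mem_product.1 hf).1 ▸ mem_univ f.2)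

end Finset

section Tiling

variable {G : Type*} [AddCommGroup G]

theorem Tiles.existsUnique_sub_mem {F : Finset G} {A : Set G} (hA : Tiles F A) (z : G) :
    ∃! f, f ∈ F ∧ z - f ∈ A := by
  obtain ⟨⟨f, a⟩, ⟨hf, ha, rfl⟩, huniq⟩ := hA z
  refine ⟨f, ⟨hf, by simpa using ha⟩, fun g ⟨hg, hga⟩ => ?_⟩
  exact congrArg Prod.fst (huniq (g, f + a - g) ⟨hg, hga, add_sub_cancel g _⟩)

theorem Tiles.sum_indicator_sub {R : Type*} [AddCommMonoidWithOne R] {F : Finset G} {A : Set G}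
    (hA : Tiles F A) (z : G) : ∑ f ∈ F, A.indicator (1 : G → R) (z - f) = 1 := by
  obtain ⟨f, ⟨hf, hfA⟩, huniq⟩ := hA.existsUnique_sub_mem z
  rw [sum_eq_single_of_mem f hf fun g hg hgf => Set.indicator_of_notMem
    (fun hgA => hgf (huniq g ⟨hg, hgA⟩)) _, Set.indicator_of_mem hfA, Pi.one_apply]

theorem Tiles.sum_fiber_mul_sum_column [Fintype G] {R : Type*} [CommSemiring R]
    {F : Finset (ℤ × G)} {A : Set (ℤ × G)} (hA : Tiles F A) (φ : AddChar G R) (n : ℤ) :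
    ∑ s ∈ F.image Prod.fst, (∑ t ∈ F.fiber s, φ t) * ∑ y, (Prod.mk (n - s) ⁻¹' A).indicator φ y
      = ∑ u, φ u := by
  have hshift : ∀ f ∈ F, ∑ u, φ u * A.indicator 1 ((n, u) - f)
      = φ f.2 * ∑ y, (Prod.mk (n - f.1) ⁻¹' A).indicator φ y := by
    intro f _
    rw [mul_sum, ← Equiv.sum_comp (Equiv.addLeft f.2)]
    refine sum_congr rfl fun y _ => ?_
    have hsub : (n, f.2 + y) - f = (n - f.1, y) := by ext <;> simp
    by_cases hy : (n - f.1, y) ∈ A <;> simp [hsub, hy, AddChar.map_add_eq_mul]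
  calc _ = ∑ f ∈ F, φ f.2 * ∑ y, (Prod.mk (n - f.1) ⁻¹' A).indicator φ y := by
        rw [sum_eq_sum_fiber F fun s t => φ t * ∑ y, (Prod.mk (n - s) ⁻¹' A).indicator φ y]
        simp only [sum_mul]
    _ = ∑ f ∈ F, ∑ u, φ u * A.indicator 1 ((n, u) - f) := (sum_congr rfl hshift).symm
    _ = ∑ u, φ u * ∑ f ∈ F, A.indicator 1 ((n, u) - f) := by simp only [mul_sum]; exact sum_comm
    _ = ∑ u, φ u := by simp only [hA.sum_indicator_sub, mul_one]

end Tiling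

theorem Set.eq_of_forall_sum_indicator_addChar_eq {G : Type*} [AddCommGroup G] [Fintype G]
    {B C : Set G} (h : ∀ φ : AddChar G ℂ, ∑ y, B.indicator φ y = ∑ y, C.indicator φ y) :
    B = C := by
  classical
  have hlin : Fintype.linearCombination ℂ (B.indicator 1 : G → ℂ)
      = Fintype.linearCombination ℂ (C.indicator 1 : G → ℂ) :=
    (AddChar.complexBasis G).ext fun φ => by
      simpa [Fintype.linearCombination_apply, Set.indicator_apply, mul_comm] using h φ
  ext y
  have := congrArg (· (Pi.single y 1)) hlin
  simp only [Fintype.linearCombination_apply_single, one_smul] at this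
  by_cases hB : y ∈ B <;> by_cases hC : y ∈ C <;> simp_all

section LinearRecurrence

variable {K : Type*} [Ring K] [NoZeroDivisors K] {S : Finset ℤ} {w a : ℤ → K} {c : K}

theorem eq_of_linearRecurrence (hrec : ∀ n, ∑ s ∈ S, w s * a (n - s) = c) {s₀ : ℤ}
    (hs₀ : s₀ ∈ S) (hw₀ : w s₀ ≠ 0) {n m : ℤ}
    (h : ∀ s ∈ S, s ≠ s₀ → w s ≠ 0 → a (n + s₀ - s) = a (m + s₀ - s)) : a n = a m := by
  have hdiff : ∑ s ∈ S, w s * (a (n + s₀ - s) - a (m + s₀ - s)) = 0 := by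
    simp only [mul_sub, sum_sub_distrib, hrec, sub_self]
  rw [sum_eq_single_of_mem s₀ hs₀ fun s hs hne => ?_] at hdiff
  · simpa [sub_eq_zero, hw₀] using hdiff
  · by_cases hw : w s = 0
    · rw [hw, zero_mul]
    · rw [h s hs hne hw, sub_self, mul_zero]

variable (hrec : ∀ n, ∑ s ∈ S, w s * a (n - s) = c) (hw : ∃ s ∈ S, w s ≠ 0) {D : ℕ}
  (hD : ∀ s ∈ S, ∀ s' ∈ S, s - s' ≤ D) {n m : ℤ} (h : ∀ k < D, a (n + k) = a (m + k))
include hrec hw hD h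

theorem linearRecurrence_next : a (n + D) = a (m + D) := by
  classical
  obtain ⟨s₀, hs₀, hmin⟩ :=
    exists_min_image (S.filter (w · ≠ 0)) id (by simpa [Finset.Nonempty] using hw)
  obtain ⟨hs₀, hw₀⟩ := mem_filter.1 hs₀
  refine eq_of_linearRecurrence hrec hs₀ hw₀ fun s hs hne hws => ?_
  have hlt : s₀ < s := lt_of_le_of_ne (hmin s (mem_filter.2 ⟨hs, hws⟩)) hne.symm
  have hle := hD s hs s₀ hs₀
  have := h (D - (s - s₀)).toNat (by omega)
  rwa [Int.toNat_of_nonneg (by omega), show n + (D - (s - s₀)) = n + D + s₀ - s by ring,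
    show m + (D - (s - s₀)) = m + D + s₀ - s by ring] at this

theorem linearRecurrence_prev : a (n - 1) = a (m - 1) := by
  classical
  obtain ⟨s₀, hs₀, hmax⟩ :=
    exists_max_image (S.filter (w · ≠ 0)) id (by simpa [Finset.Nonempty] using hw)
  obtain ⟨hs₀, hw₀⟩ := mem_filter.1 hs₀
  refine eq_of_linearRecurrence hrec hs₀ hw₀ fun s hs hne hws => ?_
  have hlt : s < s₀ := lt_of_le_of_ne (hmax s (mem_filter.2 ⟨hs, hws⟩)) hne
  have hle := hD s₀ hs₀ s hs
  have := h (s₀ - s - 1).toNat (by omega)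
  rwa [Int.toNat_of_nonneg (by omega), show n + (s₀ - s - 1) = n - 1 + s₀ - s by ring,
    show m + (s₀ - s - 1) = m - 1 + s₀ - s by ring] at this

end LinearRecurrence

theorem exists_periodic_of_window_determined {α : Type*} [Finite α] (c : ℤ → α) (D : ℕ)
    (hnext : ∀ n m, (∀ k < D, c (n + k) = c (m + k)) → c (n + D) = c (m + D))
    (hprev : ∀ n m, (∀ k < D, c (n + k) = c (m + k)) → c (n - 1) = c (m - 1)) :
    ∃ N > 0, Function.Periodic c N := by
  obtain ⟨x, y, hxy, hwin⟩ :=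
    Finite.exists_ne_map_eq_of_infinite fun (j : ℕ) (k : Fin D) => c (j + k)
  wlog hlt : x < y generalizing x y
  · exact this y x hxy.symm hwin.symm (by omega)
  have hsucc : ∀ n m, (∀ k < D, c (n + k) = c (m + k)) →
      ∀ k < D, c (n + 1 + k) = c (m + 1 + k) := by
    intro n m hw k hk
    rcases Nat.lt_or_ge (k + 1) D with hk1 | hk1
    · simpa [add_assoc, add_comm (1 : ℤ)] using hw (k + 1) hk1
    · simpa [show (1 + k : ℤ) = D by omega, add_assoc, add_comm (1 : ℤ)] using hnext n m hw
  have hpred : ∀ n m, (∀ k < D, c (n + k) = c (m + k)) →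
      ∀ k < D, c (n - 1 + k) = c (m - 1 + k) := by
    intro n m hw k hk
    rcases k with _ | k
    · simpa using hprev n m hw
    · simpa [sub_add_eq_add_sub, add_sub_assoc] using hw k (by omega)
  have hall : ∀ z : ℤ, ∀ k < D, c (x + z + k) = c (y + z + k) := by
    intro z
    induction z using Int.induction_on with
    | zero => simpa using fun k hk => congrFun hwin ⟨k, hk⟩
    | succ i ih => simpa [add_assoc] using hsucc _ _ ih
    | pred i ih => simpa [sub_eq_add_neg, add_assoc] using hpred _ _ ih
  refine ⟨y - x, by omega, fun u => ?_⟩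
  simpa [show (x : ℤ) + (u - D - x) + D = u by ring,
    show (y : ℤ) + (u - D - x) + D = u + (y - x) by ring] using (hnext _ _ (hall (u - D - x))).symm

theorem Tiles.exists_periodic_of_sum_fiber_ne_zero {G : Type*} [AddCommGroup G] [Fintype G]
    {F : Finset (ℤ × G)} {A : Set (ℤ × G)} (hA : Tiles F A)
    (hF : ∀ φ : AddChar G ℂ, ∃ s ∈ F.image Prod.fst, ∑ t ∈ F.fiber s, φ t ≠ 0) :
    ∃ N : ℤ, 0 < N ∧ ∀ a, a + (N, 0) ∈ A ↔ a ∈ A := by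
  set S := F.image Prod.fst
  obtain ⟨b, hb⟩ := ((S ×ˢ S).image fun q => q.1 - q.2).bddAbove
  have hD : ∀ s ∈ S, ∀ s' ∈ S, s - s' ≤ b.toNat := fun s hs s' hs' =>
    (hb (mem_image_of_mem _ (mem_product.2 ⟨hs, hs'⟩ : (s, s') ∈ S ×ˢ S))).trans
      (Int.self_le_toNat b)
  let column (n : ℤ) : Set G := Prod.mk n ⁻¹' A
  let coeff (φ : AddChar G ℂ) (n : ℤ) : ℂ := ∑ y, (column n).indicator φ y
  have hcoeff : ∀ n m, (∀ k < b.toNat, column (n + k) = column (m + k)) →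
      ∀ φ, ∀ k < b.toNat, coeff φ (n + k) = coeff φ (m + k) := fun n m h φ k hk => by
    simp only [coeff, h k hk]
  obtain ⟨N, hN, hper⟩ := exists_periodic_of_window_determined column b.toNat
    (fun n m h => Set.eq_of_forall_sum_indicator_addChar_eq fun φ =>
      linearRecurrence_next (a := coeff φ) (hA.sum_fiber_mul_sum_column φ) (hF φ) hD
        (hcoeff n m h φ))
    (fun n m h => Set.eq_of_forall_sum_indicator_addChar_eq fun φ =>
      linearRecurrence_prev (a := coeff φ) (hA.sum_fiber_mul_sum_column φ) (hF φ) hD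
        (hcoeff n m h φ))
  exact ⟨N, hN, fun ⟨u, v⟩ => by simpa [column] using Set.ext_iff.1 (hper u) v⟩

theorem AddChar.apply_eq_pow_val {n : ℕ} [NeZero n] {M : Type*} [Monoid M]
    (φ : AddChar (ZMod n) M) (t : ZMod n) : φ t = φ 1 ^ t.val := by
  rw [← AddChar.map_nsmul_eq_pow, nsmul_one, ZMod.natCast_zmod_val]

section ZModPrime

variable {p : ℕ} [Fact p.Prime]

theorem AddChar.isPrimitiveRoot_apply_one {K : Type*} [Field K] {φ : AddChar (ZMod p) K}
    (hφ : φ ≠ 1) : IsPrimitiveRoot (φ 1) p := by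
  refine IsPrimitiveRoot.iff_orderOf.2 <| orderOf_eq_prime ?_ fun h => hφ ?_
  · rw [← AddChar.map_nsmul_eq_pow, nsmul_one, ZMod.natCast_self, AddChar.map_zero_eq_one]
  · ext t
    rw [apply_eq_pow_val, h, one_pow, one_apply]

-- `∑_{t ∈ B} X^t` has degree `< p`, so if it vanishes at `ξ` it is a constant multiple of
-- `Φ_p = 1 + X + ⋯ + X^(p-1)`, forcing `B = ∅` or `B = univ`.
theorem IsPrimitiveRoot.sum_pow_val_ne_zero {K : Type*} [Field K] [CharZero K] {ξ : K}
    (hξ : IsPrimitiveRoot ξ p) {B : Finset (ZMod p)} (hB : B.Nonempty) (hB' : B ≠ univ) :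
    ∑ t ∈ B, ξ ^ t.val ≠ 0 := by
  intro hsum
  set Q : ℚ[X] := ∑ t ∈ B, X ^ t.val
  have hQcoeff : ∀ t : ZMod p, Q.coeff t.val = if t ∈ B then 1 else 0 := by
    intro t
    simp only [Q, finsetSum_coeff, coeff_X_pow, ZMod.val_injective p |>.eq_iff, sum_ite_eq]
  have hΦ : cyclotomic p ℚ ∣ Q := by
    rw [cyclotomic_eq_minpoly_rat hξ (Fact.out : p.Prime).pos]
    exact minpoly.dvd ℚ ξ (by simpa [Q] using hsum)
  have hdeg : Q.natDegree ≤ (cyclotomic p ℚ).natDegree := by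
    rw [natDegree_cyclotomic, Nat.totient_prime Fact.out]
    refine natDegree_sum_le_of_forall_le _ _ fun t _ => ?_
    have := ZMod.val_lt t
    rw [natDegree_X_pow]; omega
  have hQ := eq_leadingCoeff_mul_of_monic_of_dvd_of_natDegree_le (cyclotomic.monic p ℚ) hΦ hdeg
  generalize Q.leadingCoeff = c at hQ
  have hΦcoeff : ∀ t : ZMod p, (cyclotomic p ℚ).coeff t.val = 1 := by
    intro t
    simp [cyclotomic_prime, coeff_X_pow, ZMod.val_lt t]
  have hconst : ∀ t : ZMod p, (if t ∈ B then 1 else 0 : ℚ) = c := by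
    intro t
    rw [← hQcoeff, hQ, coeff_C_mul, hΦcoeff, mul_one]
  obtain ⟨t₁, ht₁⟩ := hB
  obtain ⟨t₂, ht₂⟩ : ∃ t, t ∉ B := by simpa [eq_univ_iff_forall] using hB'
  have h₁ := hconst t₁
  have h₂ := hconst t₂
  simp only [ht₁, ht₂, if_true, if_false] at h₁ h₂
  exact one_ne_zero (h₁.trans h₂.symm)

theorem AddChar.sum_ne_zero_of_ne_univ {K : Type*} [Field K] [CharZero K]
    (φ : AddChar (ZMod p) K) {B : Finset (ZMod p)} (hB : B.Nonempty) (hB' : B ≠ univ) :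
    ∑ t ∈ B, φ t ≠ 0 := by
  by_cases hφ : φ = 1
  · simpa [hφ] using hB.ne_empty
  · simpa only [← apply_eq_pow_val] using
      (isPrimitiveRoot_apply_one hφ).sum_pow_val_ne_zero hB hB'

end ZModPrime

theorem stmt_15 (p : ℕ) [Fact p.Prime] (F : Finset (ℤ × ZMod p))
    (hF : ¬ ∃ Ft : Finset ℤ, F = Ft ×ˢ (Finset.univ : Finset (ZMod p))) :
    ∀ A : Set (ℤ × ZMod p), Tiles F A →
      ∃ γ : ℤ × ZMod p, addOrderOf γ = 0 ∧ ∀ a : ℤ × ZMod p, a + γ ∈ A ↔ a ∈ A := by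
  intro A hA
  obtain ⟨s, hs, hne⟩ := exists_fiber_ne_univ hF
  obtain ⟨f, hf, rfl⟩ := mem_image.1 hs
  obtain ⟨N, hN, hper⟩ := hA.exists_periodic_of_sum_fiber_ne_zero fun φ =>
    ⟨f.1, hs, φ.sum_ne_zero_of_ne_univ ⟨f.2, mem_fiber.2 hf⟩ hne⟩
  exact ⟨(N, 0), addOrderOf_eq_zero_iff'.2 fun k hk h => by
    simpa [hN.ne', hk.ne'] using congrArg Prod.fst h, hper⟩
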